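/- arXiv:2401.10550 — 10 statements merged into one kernel-verified Lean document; each statement's English description precedes it below -/
import Mathlib

section
/- For every finite coloring of the natural numbers and every pair (k, r) with k the desired progression length, there exists a monochromatic arithmetic progression of length k. Precisely: if C : ℕ → Fin r is any coloring and k : ℕ, then there exist a, d ∈ ℕ with d > 0 such that all of a, a+d, ..., a+(k-1)d have the same color. -/
theorem vdW (r k : ℕ) (C : ℕ → Fin r) :
    ∃ a d : ℕ, 0 < d ∧ ∀ i < k, C (a + i * d) = C a := by
  obtain ⟨d, hd, b, c, h⟩ :=
    Combinatorics.exists_mono_homothetic_copy (Finset.range k) C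
  refine ⟨b, d, hd, fun i hi => ?_⟩
  have h0 : C b = c := by
    have := h 0 (Finset.mem_range.mpr (Nat.pos_of_ne_zero (by omega)))
    simpa using this
  have hi' := h i (Finset.mem_range.mpr hi)
  rw [h0]
  rw [smul_eq_mul, mul_comm] at hi'
  rwa [add_comm] at hi'
end

section
/- If A ⊆ ℕ is piecewise syndetic and A = B ∪ C, then B is piecewise syndetic or C is piecewise syndetic (piecewise syndetic sets are partition regular for 2-cell partitions). -/
open Set

def Thick (A : Set ℕ) : Prop :=
  ∀ F : Finset ℕ, ∃ x : ℕ, ∀ f ∈ F, f + x ∈ A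

def PiecewiseSyndetic (A : Set ℕ) : Prop :=
  ∃ F : Finset ℕ, Thick (⋃ t ∈ F, {y : ℕ | t + y ∈ A})

def Syndetic (A : Set ℕ) : Prop :=
  ∃ F : Finset ℕ, ∀ n : ℕ, ∃ t ∈ F, t + n ∈ A

def FS (x : ℕ → ℕ) : Set ℕ :=
  {n : ℕ | ∃ H : Finset ℕ, H.Nonempty ∧ n = ∑ t ∈ H, x t}

def IPSet (A : Set ℕ) : Prop :=
  ∃ x : ℕ → ℕ, Function.Injective x ∧ FS x ⊆ A

def IPStar (A : Set ℕ) : Prop :=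
  ∀ B : Set ℕ, IPSet B → (A ∩ B).Nonempty

theorem pws_partition (A B C : Set ℕ) (hA : PiecewiseSyndetic A) (hBC : A = B ∪ C) :
    PiecewiseSyndetic B ∨ PiecewiseSyndetic C := by
  obtain ⟨F, hF⟩ := hA
  by_cases hB : Thick (⋃ t ∈ F, {y : ℕ | t + y ∈ B})
  · exact Or.inl ⟨F, hB⟩
  · right
    rw [Thick] at hB
    push_neg at hB
    obtain ⟨G, hG⟩ := hB
    refine ⟨(F ×ˢ G).image (fun p => p.1 + p.2), fun H => ?_⟩
    obtain ⟨x, hx⟩ := hF ((G ×ˢ H).image (fun p => p.1 + p.2))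
    refine ⟨x, fun h hh => ?_⟩
    obtain ⟨g, hg, hgB⟩ := hG (h + x)
    have hT := hx (g + h) (by
      simp only [Finset.mem_image, Finset.mem_product]
      exact ⟨(g, h), ⟨hg, hh⟩, rfl⟩)
    simp only [mem_iUnion, mem_setOf_eq] at hT
    obtain ⟨t, ht, htA⟩ := hT
    have hBC' : t + (g + h + x) ∈ B ∪ C := by rw [← hBC]; exact htA
    rcases hBC' with hb | hc
    · exfalso
      apply hgB
      simp only [mem_iUnion, mem_setOf_eq]
      refine ⟨t, ht, ?_⟩
      have : t + (g + (h + x)) = t + (g + h + x) := by ring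
      rw [this]; exact hb
    · simp only [mem_iUnion, mem_setOf_eq, Finset.mem_image, Finset.mem_product]
      refine ⟨t + g, ⟨(t, g), ⟨ht, hg⟩, rfl⟩, ?_⟩
      have : t + g + (h + x) = t + (g + h + x) := by ring
      rw [this]; exact hc
end

section
/- A set A ⊆ ℕ is piecewise syndetic (with respect to addition) if and only if A belongs to some ultrafilter p lying in the smallest two-sided ideal K(βℕ, +) of the semigroup (βℕ, +). -/
open Set

attribute [local instance] Ultrafilter.add

/-- Two-sided ideals of the semigroup (βℕ, +). -/
def IsTwoSidedIdeal (I : Set (Ultrafilter ℕ)) : Prop :=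
  I.Nonempty ∧ ∀ p ∈ I, ∀ q : Ultrafilter ℕ, p + q ∈ I ∧ q + p ∈ I

/-- The smallest two-sided ideal K(βℕ, +). -/
def smallestIdeal : Set (Ultrafilter ℕ) :=
  ⋂₀ {I : Set (Ultrafilter ℕ) | IsTwoSidedIdeal I}

namespace PWSAux

lemma mem_add' {A : Set ℕ} {p q : Ultrafilter ℕ} :
    A ∈ p + q ↔ {x | {y | x + y ∈ A} ∈ q} ∈ p := Iff.rfl

lemma pure_add' {A : Set ℕ} {t : ℕ} {q : Ultrafilter ℕ} :
    A ∈ (pure t : Ultrafilter ℕ) + q ↔ {y | t + y ∈ A} ∈ q := by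
  rw [mem_add', Ultrafilter.mem_pure]; rfl

lemma add_assoc' (p q r : Ultrafilter ℕ) : p + q + r = p + (q + r) :=
  Ultrafilter.coe_inj.mp <| Filter.ext' fun s => by
    simp only [Ultrafilter.eventually_add, add_assoc]

lemma zero_add' (q : Ultrafilter ℕ) : (pure 0 : Ultrafilter ℕ) + q = q :=
  Ultrafilter.coe_inj.mp <| Filter.ext fun s => by
    rw [Ultrafilter.mem_coe, pure_add']; simp

/-- left ideals of (βℕ, +) -/
def LeftIdeal (L : Set (Ultrafilter ℕ)) : Prop :=
  L.Nonempty ∧ ∀ p ∈ L, ∀ q : Ultrafilter ℕ, q + p ∈ L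

/-- minimal closed left ideals -/
def MinIdeal (L : Set (Ultrafilter ℕ)) : Prop :=
  LeftIdeal L ∧ IsClosed L ∧ ∀ L', LeftIdeal L' → IsClosed L' → L' ⊆ L → L' = L

lemma principal_leftIdeal (q : Ultrafilter ℕ) :
    LeftIdeal (range (· + q)) ∧ IsClosed (range (· + q)) ∧ q ∈ range (· + q) := by
  refine ⟨⟨⟨q, ⟨pure 0, zero_add' q⟩⟩, ?_⟩, ?_, ⟨pure 0, zero_add' q⟩⟩
  · rintro p ⟨r, rfl⟩ s
    exact ⟨s + r, add_assoc' s r q⟩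
  · have : range (· + q) = (· + q) '' univ := (image_univ).symm
    rw [this]
    exact (isCompact_univ.image (Ultrafilter.continuous_add_left q)).isClosed

/-- every closed left ideal contains a minimal closed left ideal -/
lemma exists_minIdeal {L₀ : Set (Ultrafilter ℕ)} (h₀ : LeftIdeal L₀) (hc₀ : IsClosed L₀) :
    ∃ L, MinIdeal L ∧ L ⊆ L₀ := by
  set S : Set (Set (Ultrafilter ℕ)) := {L | L ⊆ L₀ ∧ LeftIdeal L ∧ IsClosed L} with hS
  have H : ∀ c ⊆ S, IsChain (· ⊆ ·) c → c.Nonempty → ∃ lb ∈ S, ∀ s ∈ c, lb ⊆ s := by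
    intro c hcS hchain hcne
    refine ⟨⋂₀ c, ⟨?_, ⟨?_, ?_⟩, ?_⟩, fun s hs => sInter_subset_of_mem hs⟩
    · obtain ⟨s, hs⟩ := hcne
      exact (sInter_subset_of_mem hs).trans (hcS hs).1
    · haveI : Nonempty c := hcne.coe_sort
      apply IsCompact.nonempty_sInter_of_directed_nonempty_isCompact_isClosed
      · exact (IsChain.directedOn hchain.symm)
      · exact fun U hU => (hcS hU).2.1.1
      · exact fun U hU => (hcS hU).2.2.isCompact
      · exact fun U hU => (hcS hU).2.2
    · intro p hp s
      rw [mem_sInter] at hp ⊢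
      exact fun t ht => (hcS ht).2.1.2 p (hp t ht) s
    · exact isClosed_sInter fun U hU => (hcS hU).2.2
  obtain ⟨m, hm₀, hmem, hmin⟩ := zorn_superset_nonempty S H L₀ ⟨subset_rfl, h₀, hc₀⟩
  refine ⟨m, ⟨hmem.2.1, hmem.2.2, fun L' hL' hcL' hsub => ?_⟩, hmem.1⟩
  exact subset_antisymm hsub (hmin ⟨hsub.trans hmem.1, hL', hcL'⟩ hsub)

/-- a minimal closed left ideal is minimal among all (not nec. closed) left ideals -/
lemma minIdeal_subset {L J : Set (Ultrafilter ℕ)} (hL : MinIdeal L)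
    (hJ : LeftIdeal J) (hsub : J ⊆ L) : L ⊆ J := by
  obtain ⟨r, hr⟩ := hJ.1
  obtain ⟨hli, hcl, hran⟩ := principal_leftIdeal r
  have h1 : range (· + r) ⊆ J := by rintro p ⟨s, rfl⟩; exact hJ.2 r hr s
  have h2 : range (· + r) = L := hL.2.2 _ hli hcl (h1.trans hsub)
  rw [← h2]; exact h1

lemma minIdeal_subset_twoSided {L I : Set (Ultrafilter ℕ)} (hL : MinIdeal L)
    (hI : IsTwoSidedIdeal I) : L ⊆ I := by
  obtain ⟨i, hi⟩ := hI.1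
  obtain ⟨l, hl⟩ := hL.1.1
  have key : LeftIdeal (L ∩ I) := by
    refine ⟨⟨i + l, hL.1.2 l hl i, (hI.2 i hi l).1⟩, ?_⟩
    rintro p ⟨hpL, hpI⟩ q
    exact ⟨hL.1.2 p hpL q, (hI.2 p hpI q).2⟩
  exact (minIdeal_subset hL key inter_subset_left).trans inter_subset_right

/-- K(βℕ): union of all minimal closed left ideals -/
def Kset : Set (Ultrafilter ℕ) := {p | ∃ L, MinIdeal L ∧ p ∈ L}

lemma Kset_twoSided : IsTwoSidedIdeal Kset := by
  constructor
  · obtain ⟨L, hL, -⟩ := exists_minIdeal (L₀ := univ) ⟨⟨pure 0, trivial⟩, fun _ _ _ => trivial⟩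
      isClosed_univ
    obtain ⟨p, hp⟩ := hL.1.1
    exact ⟨p, L, hL, hp⟩
  · rintro p ⟨L, hL, hpL⟩ q
    constructor
    · -- p + q ∈ (· + q) '' L, which is a minimal closed left ideal
      refine ⟨(· + q) '' L, ⟨⟨⟨p + q, ⟨p, hpL, rfl⟩⟩, ?_⟩, ?_, ?_⟩, ⟨p, hpL, rfl⟩⟩
      · rintro r ⟨l, hl, rfl⟩ s
        exact ⟨s + l, hL.1.2 l hl s, add_assoc' s l q⟩
      · exact ((hL.2.1.isCompact).image (Ultrafilter.continuous_add_left q)).isClosed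
      · intro J hJ hJc hJsub
        have hJ0 : LeftIdeal (L ∩ (· + q) ⁻¹' J) := by
          constructor
          · obtain ⟨x, hx⟩ := hJ.1
            obtain ⟨l, hl, rfl⟩ := hJsub hx
            exact ⟨l, hl, hx⟩
          · rintro r ⟨hrL, hrJ⟩ s
            refine ⟨hL.1.2 r hrL s, ?_⟩
            show s + r + q ∈ J
            rw [add_assoc']
            exact hJ.2 _ hrJ s
        have hJ0c : IsClosed (L ∩ (· + q) ⁻¹' J) :=
          hL.2.1.inter (hJc.preimage (Ultrafilter.continuous_add_left q))
        have : L ∩ (· + q) ⁻¹' J = L := hL.2.2 _ hJ0 hJ0c inter_subset_left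
        refine subset_antisymm hJsub ?_
        rintro x ⟨l, hl, rfl⟩
        have hl2 : l ∈ L ∩ (· + q) ⁻¹' J := by rw [this]; exact hl
        exact hl2.2
    · exact ⟨L, hL, hL.1.2 p hpL q⟩

lemma Kset_subset_smallest : Kset ⊆ smallestIdeal := by
  rintro p ⟨L, hL, hpL⟩ I hI
  exact minIdeal_subset_twoSided hL hI hpL

/-- from a thick set, get q with all shifts in q -/
lemma thick_ultrafilter {T : Set ℕ} (hT : Thick T) :
    ∃ q : Ultrafilter ℕ, ∀ n : ℕ, {y | n + y ∈ T} ∈ q := by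
  set C : ℕ → Set ℕ := fun n => ⋂ m ∈ Finset.range (n + 1), {y | m + y ∈ T} with hC
  have hCne : ∀ n, (C n).Nonempty := by
    intro n
    obtain ⟨x, hx⟩ := hT (Finset.range (n + 1))
    exact ⟨x, by simp only [hC, mem_iInter]; exact fun m hm => hx m hm⟩
  have hCanti : Antitone C := by
    intro a b hab y hy
    simp only [hC, mem_iInter, Finset.mem_range] at hy ⊢
    exact fun m hm => hy m (by omega)
  have hdir : Directed (· ≥ ·) fun n => Filter.principal (C n) := by
    intro a b
    exact ⟨a ⊔ b, Filter.principal_mono.2 (hCanti le_sup_left),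
      Filter.principal_mono.2 (hCanti le_sup_right)⟩
  haveI : (⨅ n, Filter.principal (C n)).NeBot :=
    Filter.iInf_neBot_of_directed hdir fun n => Filter.principal_neBot_iff.mpr (hCne n)
  obtain ⟨q, hq⟩ := Ultrafilter.exists_le (⨅ n, Filter.principal (C n))
  refine ⟨q, fun n => ?_⟩
  have h1 : C n ∈ q := hq (Filter.mem_iInf_of_mem n (Filter.mem_principal_self _))
  refine q.toFilter.mem_of_superset h1 ?_
  intro y hy
  simp only [hC, mem_iInter] at hy
  exact hy n (by simp)

end PWSAux

open PWSAux in
theorem pws_iff_mem_smallest_ideal (A : Set ℕ) :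
    PiecewiseSyndetic A ↔ ∃ p : Ultrafilter ℕ, A ∈ p ∧ p ∈ smallestIdeal := by
  constructor
  · rintro ⟨F, hF⟩
    set T := ⋃ t ∈ F, {y : ℕ | t + y ∈ A} with hTdef
    obtain ⟨q, hq⟩ := thick_ultrafilter hF
    -- every element of range (· + q) contains T
    have hTmem : ∀ r ∈ range (· + q), T ∈ r := by
      rintro r ⟨s, rfl⟩
      rw [mem_add']
      have : {x | {y | x + y ∈ T} ∈ q} = univ := eq_univ_of_forall fun x => hq x
      rw [this]; exact Filter.univ_mem
    obtain ⟨hli, hcl, -⟩ := principal_leftIdeal q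
    obtain ⟨L, hL, hLsub⟩ := exists_minIdeal hli hcl
    obtain ⟨r, hr⟩ := hL.1.1
    have hTr : T ∈ r := hTmem r (hLsub hr)
    obtain ⟨t, -, ht⟩ := (Ultrafilter.finite_biUnion_mem_iff F.finite_toSet).mp
      (by rwa [Finset.set_biUnion_coe])
    refine ⟨pure t + r, pure_add'.mpr ht, ?_⟩
    intro I hI
    exact minIdeal_subset_twoSided hL hI (hL.1.2 r hr (pure t))
  · rintro ⟨p, hAp, hps⟩
    have hpK : p ∈ Kset := hps Kset Kset_twoSided
    obtain ⟨L, hL, hpL⟩ := hpK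
    -- claim: every q ∈ L has some shift of A
    have claim : ∀ q ∈ L, ∃ x : ℕ, {y | x + y ∈ A} ∈ q := by
      intro q hq
      obtain ⟨hli, hcl, hran⟩ := principal_leftIdeal q
      have hsub : range (· + q) ⊆ L := by rintro r ⟨s, rfl⟩; exact hL.1.2 q hq s
      have heq : range (· + q) = L := hL.2.2 _ hli hcl hsub
      have : p ∈ range (· + q) := heq ▸ hpL
      obtain ⟨r, rfl⟩ := this
      have : {x | {y | x + y ∈ A} ∈ q} ∈ r := mem_add'.mp hAp
      obtain ⟨x, hx⟩ := Ultrafilter.nonempty_of_mem this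
      exact ⟨x, hx⟩
    -- compactness: finite subcover
    have hLcomp : IsCompact L := hL.2.1.isCompact
    have hcover : L ⊆ ⋃ x : ℕ, {u : Ultrafilter ℕ | {y | x + y ∈ A} ∈ u} := by
      intro q hq
      obtain ⟨x, hx⟩ := claim q hq
      exact mem_iUnion.mpr ⟨x, hx⟩
    obtain ⟨t, ht⟩ := hLcomp.elim_finite_subcover _
      (fun x => ultrafilter_isOpen_basic {y | x + y ∈ A}) hcover
    refine ⟨t, ?_⟩
    -- show thickness of T := ⋃ x ∈ t, {y | x + y ∈ A}
    intro G
    have hmemp : ∀ g : ℕ, {y | g + y ∈ ⋃ x ∈ t, {w : ℕ | x + w ∈ A}} ∈ p := by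
      intro g
      have hgp : (pure g : Ultrafilter ℕ) + p ∈ L := hL.1.2 p hpL (pure g)
      obtain ⟨x, hxt, hx⟩ := mem_iUnion₂.mp (ht hgp)
      have hx' : {y | g + y ∈ {w : ℕ | x + w ∈ A}} ∈ p := pure_add'.mp hx
      refine p.toFilter.mem_of_superset hx' ?_
      intro y hy
      exact mem_iUnion₂.mpr ⟨x, hxt, hy⟩
    have : (⋂ g ∈ G, {y | g + y ∈ ⋃ x ∈ t, {w : ℕ | x + w ∈ A}}) ∈ p :=
      (Filter.biInter_finset_mem G).mpr fun g _ => hmemp g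
    obtain ⟨z, hz⟩ := Ultrafilter.nonempty_of_mem this
    refine ⟨z, fun g hg => ?_⟩
    simp only [mem_iInter] at hz
    exact hz g hg
end

section
/- If A ⊆ ℕ is an IP* set and n ∈ ℕ with n ≥ 1, then n⁻¹A := {x ∈ ℕ : n·x ∈ A} is also an IP* set. -/
open Set

theorem ipstar_div (A : Set ℕ) (n : ℕ) (hn : 1 ≤ n) (hA : IPStar A) :
    IPStar {x : ℕ | n * x ∈ A} := by
  intro B hB
  obtain ⟨x, hx, hxB⟩ := hB
  have hinj : Function.Injective (fun k => n * x k) := by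
    intro a b hab
    exact hx (Nat.eq_of_mul_eq_mul_left hn hab)
  obtain ⟨a, haA, H, hHne, haH⟩ := hA (FS (fun k => n * x k)) ⟨_, hinj, subset_rfl⟩
  refine ⟨∑ t ∈ H, x t, ?_, hxB ⟨H, hHne, rfl⟩⟩
  simp only [Set.mem_setOf_eq]
  rw [Finset.mul_sum]
  exact haH ▸ haA
end

section
/- The intersection of two IP* subsets of ℕ is an IP* set. -/
open Set

/-!
Let `A` be IP* and `C ⊇ FS(x)` an IP set, where we may take all `x k > 0` (replace `x` by
`k ↦ x (2k) + x (2k+1)`). By Hindman's theorem one of `FS(x) ∩ A`, `FS(x) \ A` contains `FS(b)`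
for some sequence `b`, necessarily positive. Grouping `b` into consecutive blocks, each longer
than the sum of all earlier terms, gives a strictly increasing sequence `y` with
`FS(y) ⊆ FS(b)`, so `FS(b)` is an IP set. As `A` is IP*, it meets `FS(b)`, which rules out the
second case; hence `A ∩ C` is an IP set. Applying this twice shows that `A ∩ B ∩ C` is
nonempty for IP* sets `A`, `B`.
-/

lemma apply_mem_FS (x : ℕ → ℕ) (k : ℕ) : x k ∈ FS x :=
  ⟨{k}, Finset.singleton_nonempty k, by simp⟩

lemma pos_of_mem_FS {x : ℕ → ℕ} (hx : ∀ k, 0 < x k) {m : ℕ} (hm : m ∈ FS x) : 0 < m := by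
  obtain ⟨H, hH, rfl⟩ := hm
  exact Finset.sum_pos (fun i _ => hx i) hH

lemma hindmanFS_eq_FS (x : ℕ → ℕ) : Hindman.FS x = FS x := by
  refine Subset.antisymm (fun m hm => ?_) (fun m ⟨H, hH, hm⟩ => hm ▸ Hindman.FS.finsetSum x H hH)
  induction hm with
  | head' a => exact apply_mem_FS a 0
  | tail' a m _ ih =>
    obtain ⟨H, hH, hm⟩ := ih
    refine ⟨H.image (· + 1), hH.image _, ?_⟩
    show m = ∑ t ∈ H.image (· + 1), Stream'.get a t
    rw [Finset.sum_image (add_left_injective 1).injOn]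
    exact hm
  | cons' a m _ ih =>
    obtain ⟨H, hH, hm⟩ := ih
    refine ⟨insert 0 (H.image (· + 1)), Finset.insert_nonempty _ _, ?_⟩
    show a.head + m = ∑ t ∈ insert 0 (H.image (· + 1)), Stream'.get a t
    rw [Finset.sum_insert (by simp), Finset.sum_image (add_left_injective 1).injOn, hm]
    rfl

lemma exists_FS_subset_inter_or_diff (x : ℕ → ℕ) (A : Set ℕ) :
    ∃ b : ℕ → ℕ, FS b ⊆ FS x ∩ A ∨ FS b ⊆ FS x \ A := by
  have cover : Hindman.FS x ⊆ ⋃₀ {FS x ∩ A, FS x \ A} := by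
    rw [sUnion_pair, inter_union_sdiff, hindmanFS_eq_FS]
  obtain ⟨c, hc, b, hb⟩ := Hindman.FS_partition_regular x _ (toFinite _) cover
  replace hb : FS b ⊆ c := (hindmanFS_eq_FS b).superset.trans hb
  rcases hc with rfl | rfl
  exacts [⟨b, .inl hb⟩, ⟨b, .inr hb⟩]

def blockSum (x n : ℕ → ℕ) (k : ℕ) : ℕ :=
  ∑ i ∈ Finset.Ico (n k) (n (k + 1)), x i

lemma FS_blockSum_subset (x : ℕ → ℕ) {n : ℕ → ℕ} (hn : StrictMono n) :
    FS (blockSum x n) ⊆ FS x := by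
  rintro _ ⟨H, ⟨k, hk⟩, rfl⟩
  have disjoint : (H : Set ℕ).PairwiseDisjoint fun k => Finset.Ico (n k) (n (k + 1)) := by
    intro a _ c _ hac
    rw [Function.onFun, Finset.disjoint_left]
    intro i hia hic
    simp only [Finset.mem_Ico] at hia hic
    rcases hac.lt_or_gt with h | h <;> have := hn.monotone (Nat.add_one_le_iff.2 h) <;> omega
  refine ⟨H.biUnion fun k => Finset.Ico (n k) (n (k + 1)), ⟨n k, ?_⟩,
    (Finset.sum_biUnion disjoint).symm⟩
  exact Finset.mem_biUnion.2 ⟨k, hk, Finset.mem_Ico.2 ⟨le_rfl, hn (Nat.lt_succ_self k)⟩⟩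

lemma IPSet.exists_pos {C : Set ℕ} (hC : IPSet C) :
    ∃ x : ℕ → ℕ, (∀ k, 0 < x k) ∧ FS x ⊆ C := by
  obtain ⟨x, hx, hxC⟩ := hC
  refine ⟨blockSum x (2 * ·), fun k => ?_,
    (FS_blockSum_subset x fun _ _ h => by omega).trans hxC⟩
  have block : blockSum x (2 * ·) k = x (2 * k) + x (2 * k + 1) := by
    rw [blockSum, show 2 * (k + 1) = 2 * k + 1 + 1 by ring, Finset.sum_Ico_succ_top (by omega),
      Finset.sum_Ico_succ_top le_rfl, Finset.Ico_self, Finset.sum_empty, zero_add]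
  have distinct : x (2 * k) ≠ x (2 * k + 1) := hx.ne (by omega)
  omega

def blockStarts (x : ℕ → ℕ) : ℕ → ℕ
  | 0 => 0
  | k + 1 => blockStarts x k + (∑ i ∈ Finset.range (blockStarts x k), x i) + 1

lemma blockStarts_strictMono (x : ℕ → ℕ) : StrictMono (blockStarts x) :=
  strictMono_nat_of_lt_succ fun k => by rw [blockStarts]; omega

lemma blockSum_blockStarts_strictMono {x : ℕ → ℕ} (hx : ∀ k, 0 < x k) :
    StrictMono (blockSum x (blockStarts x)) := by
  refine strictMono_nat_of_lt_succ fun k => ?_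
  set s := blockStarts x
  have starts_succ : s (k + 2) = s (k + 1) + (∑ i ∈ Finset.range (s (k + 1)), x i) + 1 := rfl
  calc blockSum x s k
      ≤ ∑ i ∈ Finset.range (s (k + 1)), x i :=
        Finset.sum_le_sum_of_subset fun i hi => Finset.mem_range.2 (Finset.mem_Ico.1 hi).2
    _ < s (k + 2) - s (k + 1) := by omega
    _ = (Finset.Ico (s (k + 1)) (s (k + 2))).card := (Nat.card_Ico _ _).symm
    _ ≤ blockSum x s (k + 1) := by
        simpa [blockSum] using
          Finset.card_nsmul_le_sum (Finset.Ico (s (k + 1)) (s (k + 2))) x 1 fun i _ => hx i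

lemma IPSet.of_pos_of_FS_subset {x : ℕ → ℕ} (hx : ∀ k, 0 < x k) {C : Set ℕ} (hC : FS x ⊆ C) :
    IPSet C :=
  ⟨_, (blockSum_blockStarts_strictMono hx).injective,
    (FS_blockSum_subset x (blockStarts_strictMono x)).trans hC⟩

lemma IPStar.inter_IPSet {A C : Set ℕ} (hA : IPStar A) (hC : IPSet C) : IPSet (A ∩ C) := by
  obtain ⟨x, hx, hxC⟩ := hC.exists_pos
  obtain ⟨b, hb | hb⟩ := exists_FS_subset_inter_or_diff x A
  all_goals have hb_pos : ∀ k, 0 < b k := fun k => pos_of_mem_FS hx (hb (apply_mem_FS b k)).1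
  · exact IPSet.of_pos_of_FS_subset hb_pos fun m hm => ⟨(hb hm).2, hxC (hb hm).1⟩
  · obtain ⟨m, hmA, hmb⟩ := hA _ (IPSet.of_pos_of_FS_subset hb_pos subset_rfl)
    exact absurd hmA (hb hmb).2

theorem ipstar_inter (A B : Set ℕ) (hA : IPStar A) (hB : IPStar B) :
    IPStar (A ∩ B) := by
  intro C hC
  obtain ⟨m, hmB, hmA, hmC⟩ := hB (A ∩ C) (hA.inter_IPSet hC)
  exact ⟨m, ⟨hmA, hmB⟩, hmC⟩
end

section
/- Schur's theorem: for every finite coloring C : ℕ → Fin r of the positive integers, there exist x ≠ y positive integers such that x, y, and x + y all receive the same color. -/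
theorem schur (r : ℕ) (C : ℕ → Fin r) :
    ∃ x y : ℕ, 0 < x ∧ 0 < y ∧ x ≠ y ∧ C x = C y ∧ C y = C (x + y) := by
  rcases Nat.eq_zero_or_pos r with rfl | hr
  · exact (C 1).elim0
  have := Fact.mk hr
  -- color on ℕ+
  set s : Set (Set ℕ+) := Set.range (fun i : Fin r => {n : ℕ+ | C n = i}) with hs
  have sfin : s.Finite := Set.finite_range _
  have scov : ⊤ ⊆ ⋃₀ s := by
    intro n _
    exact ⟨{m : ℕ+ | C m = C n}, ⟨C n, rfl⟩, rfl⟩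
  obtain ⟨c, ⟨i, rfl⟩, a, ha⟩ := Hindman.exists_FS_of_finite_cover s sfin scov
  -- all elements of Hindman.FS a have color i
  have hcol : ∀ n ∈ Hindman.FS a, C n = i := fun n hn => ha hn
  set x : ℕ+ := a.head with hx
  have hxFS : x ∈ Hindman.FS a := Hindman.FS.head a
  -- choose y in Hindman.FS a.tail with y ≠ x
  have key : ∃ y : ℕ+, y ∈ Hindman.FS a.tail ∧ y ≠ x := by
    by_cases h : a.tail.head ≠ x
    · exact ⟨a.tail.head, Hindman.FS.head _, h⟩
    · push_neg at h
      refine ⟨a.tail.head + a.tail.tail.head, Hindman.FS.cons _ _ (Hindman.FS.head _), ?_⟩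
      rw [h]
      intro hcontra
      have : (x : ℕ) < (x + a.tail.tail.head : ℕ+) := by
        push_cast; exact Nat.lt_add_of_pos_right a.tail.tail.head.2
      rw [hcontra] at this
      exact lt_irrefl _ this
  obtain ⟨y, hyT, hyx⟩ := key
  have hyFS : y ∈ Hindman.FS a := Hindman.FS.tail a y hyT
  have hxyFS : x + y ∈ Hindman.FS a := Hindman.FS.cons a y hyT
  refine ⟨x, y, x.2, y.2, ?_, ?_, ?_⟩
  · intro h; exact hyx (PNat.coe_injective h.symm)
  · rw [hcol x hxFS, hcol y hyFS]
  · rw [hcol y hyFS, show ((x : ℕ) + y) = ((x + y : ℕ+) : ℕ) by push_cast; ring,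
      hcol (x + y) hxyFS]
end

section
/- IP* polynomial van der Waerden, single linear polynomial case: if A ⊆ ℕ is piecewise syndetic and c ∈ ℕ with c ≥ 1, then the set {n : {m : m ∈ A and m + c·n ∈ A} is piecewise syndetic} is nonempty; in fact it intersects FS(⟨x_k⟩) for every injective sequence ⟨x_k⟩ in ℕ. -/
open Set

/-!
Let `F` witness that `A` is piecewise syndetic, `r = #F`, and let `s` be increasing. Thickness
puts `y + s 0, …, y + s r` simultaneously into `⋃ t ∈ F, -t + A` for `y` ranging over a translate
of any finite set; by pigeonhole two of them, `y + s j` and `y + s j'` with `j < j'`, use the same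
`t`, so `t + s j + y ∈ A ∩ (-(s j' - s j) + A)`. Hence the union of these sets over `j < j' ≤ r`
is piecewise syndetic, and by partition regularity one of them is. With `s j = c * ∑ i < j, x i`
the shift `s j' - s j` is `c` times the finite sum `∑ i ∈ [j, j'), x i ∈ FS x`.
-/

open Pointwise

theorem Finset.exists_lt_of_forall_le_card {F : Finset ℕ} {Q : ℕ → ℕ → Prop}
    (h : ∀ j ≤ F.card, ∃ t ∈ F, Q t j) :
    ∃ j j', j < j' ∧ j' ≤ F.card ∧ ∃ t ∈ F, Q t j ∧ Q t j' := by
  choose! t htF htQ using h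
  obtain ⟨j, hj, j', hj', hne, heq⟩ :=
    Finset.exists_ne_map_eq_of_card_lt_of_maps_to (s := Finset.Iic F.card) (t := F)
      (by simp) (fun j hj => htF j (Finset.mem_Iic.1 hj))
  rw [Finset.mem_Iic] at hj hj'
  rcases hne.lt_or_gt with hlt | hlt
  · exact ⟨j, j', hlt, hj', t j, htF j hj, htQ j hj, heq ▸ htQ j' hj'⟩
  · exact ⟨j', j, hlt, hj, t j', htF j' hj', htQ j' hj', heq ▸ htQ j hj⟩

theorem mem_biUnion_translates {F : Finset ℕ} {A : Set ℕ} {y : ℕ} :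
    y ∈ ⋃ t ∈ F, {y : ℕ | t + y ∈ A} ↔ ∃ t ∈ F, t + y ∈ A := by
  simp

namespace PiecewiseSyndetic

theorem nonempty {A : Set ℕ} (hA : PiecewiseSyndetic A) : A.Nonempty := by
  obtain ⟨F, hF⟩ := hA
  obtain ⟨x, hx⟩ := hF {0}
  obtain ⟨t, -, ht⟩ := mem_biUnion_translates.1 (hx 0 (Finset.mem_singleton_self 0))
  exact ⟨_, ht⟩

theorem or_of_union {B C : Set ℕ} (h : PiecewiseSyndetic (B ∪ C)) :
    PiecewiseSyndetic B ∨ PiecewiseSyndetic C := by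
  refine or_iff_not_imp_left.2 fun hB => ?_
  obtain ⟨T, hT⟩ := h
  obtain ⟨E, hE⟩ : ∃ E : Finset ℕ, ∀ y, ∃ e ∈ E, ∀ t ∈ T, t + (e + y) ∉ B := by
    by_contra! hnot
    exact hB ⟨T, fun E => (hnot E).imp fun y hy e he => mem_biUnion_translates.2 (hy e he)⟩
  refine ⟨T + E, fun D => ?_⟩
  obtain ⟨a, ha⟩ := hT (E + D)
  refine ⟨a, fun d hd => ?_⟩
  obtain ⟨e, he, heB⟩ := hE (d + a)
  obtain ⟨t, ht, htBC⟩ := mem_biUnion_translates.1 (ha (e + d) (Finset.add_mem_add he hd))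
  refine mem_biUnion_translates.2 ⟨t + e, Finset.add_mem_add ht he, ?_⟩
  rw [add_assoc t e, ← add_assoc e] at *
  exact htBC.resolve_left (heB t ht)

theorem exists_of_biUnion {ι : Type*} (I : Finset ι) (B : ι → Set ℕ)
    (h : PiecewiseSyndetic (⋃ i ∈ I, B i)) : ∃ i ∈ I, PiecewiseSyndetic (B i) := by
  classical
  induction I using Finset.induction_on with
  | empty => simpa using h.nonempty
  | insert i I _ ih =>
    rw [Finset.set_biUnion_insert] at h
    rcases h.or_of_union with hi | hI
    · exact ⟨i, Finset.mem_insert_self i I, hi⟩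
    · obtain ⟨j, hj, hBj⟩ := ih hI
      exact ⟨j, Finset.mem_insert_of_mem hj, hBj⟩

theorem exists_lt_inter_shift {A : Set ℕ} (hA : PiecewiseSyndetic A) {s : ℕ → ℕ}
    (hs : Monotone s) :
    ∃ j j', j < j' ∧ PiecewiseSyndetic {m : ℕ | m ∈ A ∧ m + (s j' - s j) ∈ A} := by
  obtain ⟨F, hF⟩ := hA
  set P := (Finset.Iic F.card ×ˢ Finset.Iic F.card).filter (fun p => p.1 < p.2)
  suffices PiecewiseSyndetic (⋃ p ∈ P, {m : ℕ | m ∈ A ∧ m + (s p.2 - s p.1) ∈ A}) by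
    obtain ⟨p, hp, hps⟩ := exists_of_biUnion P _ this
    exact ⟨p.1, p.2, (Finset.mem_filter.1 hp).2, hps⟩
  refine ⟨F + (Finset.Iic F.card).image s, fun D => ?_⟩
  obtain ⟨a, ha⟩ := hF (D + (Finset.Iic F.card).image s)
  refine ⟨a, fun d hd => ?_⟩
  obtain ⟨j, j', hjj', hj', t, ht, htj, htj'⟩ :=
    Finset.exists_lt_of_forall_le_card (F := F) (Q := fun t j => t + (d + s j + a) ∈ A)
      fun j hj => mem_biUnion_translates.1 <|
        ha _ (Finset.add_mem_add hd (Finset.mem_image_of_mem s (Finset.mem_Iic.2 hj)))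
  have hP : (j, j') ∈ P := by simp [P, hjj', hj', hjj'.le.trans hj']
  have hsj : s j ∈ (Finset.Iic F.card).image s :=
    Finset.mem_image_of_mem s (Finset.mem_Iic.2 (hjj'.le.trans hj'))
  refine mem_biUnion_translates.2
    ⟨t + s j, Finset.add_mem_add ht hsj, mem_iUnion₂.2 ⟨(j, j'), hP, ?_, ?_⟩⟩
  · convert htj using 1
    omega
  · have := hs hjj'.le
    convert htj' using 1
    dsimp only
    omega

end PiecewiseSyndetic

theorem ipstar_pvdw_linear_general (A : Set ℕ) (hA : PiecewiseSyndetic A) (c : ℕ) :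
    {n : ℕ | PiecewiseSyndetic {m : ℕ | m ∈ A ∧ m + c * n ∈ A}}.Nonempty ∧
    ∀ x : ℕ → ℕ, Function.Injective x →
      ({n : ℕ | PiecewiseSyndetic {m : ℕ | m ∈ A ∧ m + c * n ∈ A}} ∩ FS x).Nonempty := by
  have hFS (x : ℕ → ℕ) :
      ({n : ℕ | PiecewiseSyndetic {m : ℕ | m ∈ A ∧ m + c * n ∈ A}} ∩ FS x).Nonempty := by
    have hs : Monotone fun j => c * ∑ i ∈ Finset.range j, x i :=
      fun j j' hjj' => Nat.mul_le_mul_left c (Finset.sum_le_sum_of_subset (by simpa using hjj'))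
    obtain ⟨j, j', hjj', hps⟩ := hA.exists_lt_inter_shift hs
    refine ⟨∑ i ∈ Finset.Ico j j', x i, ?_, Finset.Ico j j', Finset.nonempty_Ico.2 hjj', rfl⟩
    rwa [← Nat.mul_sub, ← Finset.sum_range_add_sum_Ico x hjj'.le, Nat.add_sub_cancel_left] at hps
  exact ⟨(hFS id).imp fun _ => And.left, fun x _ => hFS x⟩

theorem ipstar_pvdw_linear (A : Set ℕ) (hA : PiecewiseSyndetic A) (c : ℕ) (hc : 1 ≤ c) :
    {n : ℕ | PiecewiseSyndetic {m : ℕ | m ∈ A ∧ m + c * n ∈ A}}.Nonempty ∧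
    ∀ x : ℕ → ℕ, Function.Injective x →
      ({n : ℕ | PiecewiseSyndetic {m : ℕ | m ∈ A ∧ m + c * n ∈ A}} ∩ FS x).Nonempty :=
  ipstar_pvdw_linear_general A hA c
end

section
/- If A ⊆ ℕ is a member of some ultrafilter p in the smallest ideal K(βℕ,+), then S = {x ∈ ℕ : -x + A ∈ p} is syndetic. -/
open Set

attribute [local instance] Ultrafilter.add

attribute [local instance] Ultrafilter.addSemigroup

namespace SyndeticAux

/-- Left ideals of `βℕ`. -/
def LeftIdeal (C : Set (Ultrafilter ℕ)) : Prop :=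
  C.Nonempty ∧ ∀ r ∈ C, ∀ s : Ultrafilter ℕ, s + r ∈ C

/-- Minimal closed left ideals of `βℕ`. -/
def MinCLI (L : Set (Ultrafilter ℕ)) : Prop :=
  (LeftIdeal L ∧ IsClosed L) ∧
    ∀ C : Set (Ultrafilter ℕ), LeftIdeal C ∧ IsClosed C → C ⊆ L → C = L

lemma mem_add_iff (U V : Ultrafilter ℕ) (A : Set ℕ) :
    A ∈ U + V ↔ {m : ℕ | {n : ℕ | m + n ∈ A} ∈ V} ∈ U := Iff.rfl

lemma pure_zero_add (r : Ultrafilter ℕ) : (pure 0 : Ultrafilter ℕ) + r = r := by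
  apply Ultrafilter.coe_inj.mp
  apply Filter.ext
  intro s
  change {m : ℕ | {n : ℕ | m + n ∈ s} ∈ r} ∈ (pure 0 : Ultrafilter ℕ) ↔ _
  simp

lemma range_mem_self (r : Ultrafilter ℕ) : r ∈ Set.range (· + r) :=
  ⟨pure 0, pure_zero_add r⟩

lemma range_isClosed (r : Ultrafilter ℕ) : IsClosed (Set.range (· + r)) :=
  (isCompact_range (Ultrafilter.continuous_add_left r)).isClosed

lemma range_leftIdeal (r : Ultrafilter ℕ) : LeftIdeal (Set.range (· + r)) := by
  constructor
  · exact ⟨r, range_mem_self r⟩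
  · rintro _ ⟨t, rfl⟩ s
    refine ⟨s + t, ?_⟩
    show s + t + r = s + (t + r)
    exact add_assoc s t r

/-- Zorn: every nonempty closed left ideal contains a minimal closed left ideal. -/
lemma exists_minCLI {C : Set (Ultrafilter ℕ)} (hC : LeftIdeal C ∧ IsClosed C) :
    ∃ L, L ⊆ C ∧ MinCLI L := by
  have hzorn : ∀ c ⊆ {D : Set (Ultrafilter ℕ) | LeftIdeal D ∧ IsClosed D},
      IsChain (· ⊆ ·) c → c.Nonempty →
      ∃ lb ∈ {D : Set (Ultrafilter ℕ) | LeftIdeal D ∧ IsClosed D}, ∀ s ∈ c, lb ⊆ s := by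
    intro c hcS hchain hcne
    haveI : Nonempty c := hcne.to_subtype
    have hdir : DirectedOn (· ⊇ ·) c := by
      intro a ha b hb
      rcases eq_or_ne a b with rfl | hne
      · exact ⟨a, ha, Set.Subset.rfl, Set.Subset.rfl⟩
      · rcases hchain ha hb hne with h | h
        · exact ⟨a, ha, Set.Subset.rfl, h⟩
        · exact ⟨b, hb, h, Set.Subset.rfl⟩
    have hne : (⋂₀ c).Nonempty :=
      IsCompact.nonempty_sInter_of_directed_nonempty_isCompact_isClosed
        hdir (fun D hD => (hcS hD).1.1)
        (fun D hD => (hcS hD).2.isCompact) (fun D hD => (hcS hD).2)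
    refine ⟨⋂₀ c, ⟨⟨hne, ?_⟩, isClosed_sInter fun D hD => (hcS hD).2⟩,
      fun s hs => sInter_subset_of_mem hs⟩
    intro r hr s
    exact fun D hD => (hcS hD).1.2 r (hr D hD) s
  obtain ⟨L, hLC, hmin⟩ :=
    zorn_superset_nonempty {D : Set (Ultrafilter ℕ) | LeftIdeal D ∧ IsClosed D} hzorn C hC
  exact ⟨L, hLC, hmin.prop, fun D hD hDL => subset_antisymm hDL (hmin.2 hD hDL)⟩

lemma minCLI_eq_range {L : Set (Ultrafilter ℕ)} (hL : MinCLI L) {r : Ultrafilter ℕ}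
    (hr : r ∈ L) : Set.range (· + r) = L := by
  refine hL.2 _ ⟨range_leftIdeal r, range_isClosed r⟩ ?_
  rintro _ ⟨s, rfl⟩
  exact hL.1.1.2 r hr s

/-- The union of all minimal closed left ideals is a two-sided ideal. -/
lemma isTwoSidedIdeal_union :
    IsTwoSidedIdeal {r : Ultrafilter ℕ | ∃ L, MinCLI L ∧ r ∈ L} := by
  constructor
  · obtain ⟨L, -, hL⟩ := exists_minCLI (C := Set.univ)
      ⟨⟨⟨pure 0, trivial⟩, fun _ _ _ => trivial⟩, isClosed_univ⟩
    obtain ⟨r, hr⟩ := hL.1.1.1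
    exact ⟨r, L, hL, hr⟩
  · rintro r ⟨L, hL, hrL⟩ q
    constructor
    · -- r + q lies in the minimal closed left ideal `range (· + (r + q))`
      refine ⟨Set.range (· + (r + q)), ⟨⟨range_leftIdeal _, range_isClosed _⟩, ?_⟩,
        range_mem_self _⟩
      intro C hC hCsub
      refine subset_antisymm hCsub ?_
      obtain ⟨n, hnC⟩ := hC.1.1
      obtain ⟨s, hs⟩ := hCsub hnC
      have hs' : s + (r + q) = n := hs
      have hsr : s + r ∈ L := hL.1.1.2 r hrL s
      -- r ∈ L = range (· + (s + r)), so r = t + (s + r)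
      have hrmem : r ∈ Set.range (· + (s + r)) := by
        rw [minCLI_eq_range hL hsr]; exact hrL
      obtain ⟨t, ht⟩ := hrmem
      have ht' : t + (s + r) = r := ht
      have hrqC : r + q ∈ C := by
        have heq : t + n = r + q := by
          rw [← hs', ← add_assoc s r q, ← add_assoc t (s + r) q, ht']
        rw [← heq]
        exact hC.1.2 _ hnC t
      rintro _ ⟨u, hu⟩
      have hu' : u + (r + q) = _ := hu
      rw [← hu']
      exact hC.1.2 _ hrqC u
    · exact ⟨L, hL, hL.1.1.2 r hrL q⟩

end SyndeticAux

theorem syndetic_of_mem_minimal (p : Ultrafilter ℕ) (hp : p ∈ smallestIdeal)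
    (A : Set ℕ) (hA : A ∈ p) :
    Syndetic {x : ℕ | {y : ℕ | x + y ∈ A} ∈ p} := by
  open SyndeticAux in
  by_contra hS
  set S : Set ℕ := {x : ℕ | {y : ℕ | x + y ∈ A} ∈ p} with hSdef
  unfold Syndetic at hS
  push_neg at hS
  -- hS : ∀ F : Finset ℕ, ∃ n, ∀ t ∈ F, t + n ∉ S
  -- build an ultrafilter q with {y | x + y ∉ S} ∈ q for all x
  set g : ℕ → Set ℕ := fun x => {y : ℕ | x + y ∉ S} with hg
  have hgen : Filter.NeBot (Filter.generate (Set.range g)) := by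
    rw [Filter.generate_neBot_iff]
    intro t hts htfin
    classical
    set c : Set ℕ → ℕ := fun b => if h : ∃ x, g x = b then h.choose else 0 with hc
    obtain ⟨n, hn⟩ := hS (htfin.toFinset.image c)
    refine ⟨n, fun b hb => ?_⟩
    have hex : ∃ x, g x = b := hts hb
    have hgb : g (c b) = b := by
      rw [hc]; simp only [hex, dif_pos]; exact hex.choose_spec
    have hns : c b + n ∉ S := hn (c b) (Finset.mem_image_of_mem c (htfin.mem_toFinset.mpr hb))
    rw [← hgb]; exact hns
  obtain ⟨q, hq⟩ := Ultrafilter.exists_le (Filter.generate (Set.range g))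
  have hqx : ∀ x : ℕ, g x ∈ q := fun x =>
    hq (Filter.mem_generate_of_mem ⟨x, rfl⟩)
  -- p lies in a minimal closed left ideal L
  obtain ⟨L, hL, hpL⟩ : ∃ L, MinCLI L ∧ p ∈ L := hp _ isTwoSidedIdeal_union
  -- p = r + (q + p) for some r
  have hqpL : q + p ∈ L := by
    rw [← minCLI_eq_range hL hpL]; exact ⟨q, rfl⟩
  obtain ⟨r, hr⟩ : ∃ r, r + (q + p) = p := by
    have : p ∈ Set.range (· + (q + p)) := by
      rw [minCLI_eq_range hL hqpL]; exact hpL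
    obtain ⟨r, hr⟩ := this
    exact ⟨r, hr⟩
  -- unfold A ∈ p = r + (q + p)
  have hA' : A ∈ r + (q + p) := hr.symm ▸ hA
  rw [mem_add_iff] at hA'
  obtain ⟨x, hx⟩ := Ultrafilter.nonempty_of_mem hA'
  have hx' : {n : ℕ | x + n ∈ A} ∈ q + p := hx
  rw [mem_add_iff] at hx'
  -- intersect with g x ∈ q
  obtain ⟨z, hz⟩ := Ultrafilter.nonempty_of_mem (q.inter_mem hx' (hqx x))
  have hz1 : {w : ℕ | x + (z + w) ∈ A} ∈ p := hz.1
  have hz2 : x + z ∉ S := hz.2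
  apply hz2
  show {y : ℕ | (x + z) + y ∈ A} ∈ p
  have heq : {w : ℕ | x + (z + w) ∈ A} = {y : ℕ | (x + z) + y ∈ A} := by
    ext w; simp [add_assoc]
  rw [← heq]
  exact hz1
end

section
/- Multiplicative Schur theorem: for every finite coloring C : ℕ → Fin r of the positive integers greater than 1, there exist x ≠ y such that x, y, and x·y receive the same color. -/
/-!
Apply Hindman's theorem to the cover of the finite products of the constant stream `2` by the
colour classes intersected with `{n | 2 ≤ n}`: one class contains all finite products `FP b` of
some stream `b`. Then `b₀, b₁, b₀ b₁` are monochromatic and, should `b₀ = b₁`, so are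
`b₀, b₁ b₂, b₀ b₁ b₂`, where now `b₀ < b₁ b₂`.
-/

namespace Hindman

theorem FP_subset_of_forall_mem {M : Type*} [Semigroup M] {a : Stream' M} {S : Set M}
    (ha : ∀ n, a.get n ∈ S) (hS : ∀ x ∈ S, ∀ y ∈ S, x * y ∈ S) : FP a ⊆ S := by
  intro m hm
  induction hm with
  | head' a => exact ha 0
  | tail' a m _ ih => exact ih fun n => ha (n + 1)
  | cons' a m _ ih => exact hS _ (ha 0) _ (ih fun n => ha (n + 1))

theorem exists_ne_mul_mem_FP {b : Stream' ℕ} (hb : ∀ n, 2 ≤ b.get n) :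
    ∃ x ∈ FP b, ∃ y ∈ FP b, x ≠ y ∧ x * y ∈ FP b := by
  by_cases h01 : b.get 0 = b.get 1
  · have h12 : b.get 1 * b.get 2 ∈ FP b.tail := FP.mul_two b.tail 0 1 one_pos
    refine ⟨b.get 0, FP.singleton b 0, _, FP.tail b _ h12, ?_, FP.cons b _ h12⟩
    have : b.get 1 < b.get 1 * b.get 2 := lt_mul_right (zero_lt_two.trans_le (hb 1)) (hb 2)
    omega
  · exact ⟨b.get 0, FP.singleton b 0, b.get 1, FP.singleton b 1, h01, FP.mul_two b 0 1 one_pos⟩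

end Hindman

open Hindman in
theorem mult_schur (r : ℕ) (C : ℕ → Fin r) :
    ∃ x y : ℕ, 1 < x ∧ 1 < y ∧ x ≠ y ∧ C x = C y ∧ C y = C (x * y) := by
  have two_le : FP (Stream'.const 2) ⊆ {n | 2 ≤ n} :=
    FP_subset_of_forall_mem (fun _ => by simp) fun _ hx _ hy =>
      show 2 ≤ _ from le_mul_of_le_of_one_le hx (one_le_two.trans hy)
  obtain ⟨_, ⟨i, rfl⟩, b, hb⟩ := FP_partition_regular (Stream'.const 2)
    (Set.range fun i : Fin r => {n | 2 ≤ n ∧ C n = i}) (Set.finite_range _)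
    fun m hm => ⟨_, ⟨C m, rfl⟩, two_le hm, rfl⟩
  obtain ⟨x, hx, y, hy, hxy, hmul⟩ :=
    exists_ne_mul_mem_FP fun n => (hb (FP.singleton b n)).1
  exact ⟨x, y, (hb hx).1, (hb hy).1, hxy, (hb hx).2.trans (hb hy).2.symm,
    (hb hy).2.trans (hb hmul).2.symm⟩
end

section
/- For every finite partition of ℕ into r cells, some cell contains FS(⟨x_n⟩) for an injective sequence ⟨x_n⟩ of positive integers (Hindman's finite sums theorem), and moreover the same cell contains FS of every sum subsystem obtained by taking y_n = ∑_{t ∈ H_n} x_t for a sequence of finite sets with max H_n < min H_{n+1}. -/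
/-!
Hindman's theorem on the positive integers yields a cell containing `FS a` for some sequence `a`
of positive integers. Summing `a` over consecutive blocks of rapidly growing length makes the block
sums strictly increasing, hence injective, and `FS` of any sum subsystem lies inside the original
`FS`, so it stays in the same cell.
-/

open Set

theorem Hindman.FS_map_subset_image {M N : Type*} [AddSemigroup M] [AddSemigroup N]
    (f : M →ₙ+ N) (a : Stream' M) : Hindman.FS (a.map f) ⊆ f '' Hindman.FS a := by
  suffices ∀ b : Stream' N, ∀ m ∈ Hindman.FS b, ∀ a : Stream' M, b = a.map f →
      m ∈ f '' Hindman.FS a from fun m hm => this _ m hm a rfl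
  intro b m hm
  induction hm with
  | head' b =>
    rintro a rfl
    exact ⟨a.head, Hindman.FS.head a, (Stream'.head_map f a).symm⟩
  | tail' b m _ ih =>
    rintro a rfl
    obtain ⟨m', hm', rfl⟩ := ih a.tail (Stream'.tail_map f a)
    exact ⟨m', Hindman.FS.tail a m' hm', rfl⟩
  | cons' b m _ ih =>
    rintro a rfl
    obtain ⟨m', hm', rfl⟩ := ih a.tail (Stream'.tail_map f a)
    exact ⟨a.head + m', Hindman.FS.cons a m' hm', by rw [map_add, Stream'.head_map]⟩

theorem exists_pos_FS_subset_fiber {r : ℕ} (C : ℕ → Fin r) :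
    ∃ (i : Fin r) (a : ℕ → ℕ), (∀ n, 0 < a n) ∧ FS a ⊆ {n | C n = i} := by
  have hcover : (⊤ : Set ℕ+) ⊆ ⋃₀ Set.range (fun i : Fin r => {p : ℕ+ | C p = i}) :=
    fun p _ => ⟨_, ⟨C p, rfl⟩, rfl⟩
  obtain ⟨_, ⟨i, rfl⟩, a, ha⟩ := Hindman.exists_FS_of_finite_cover _ (finite_range _) hcover
  refine ⟨i, fun n => a.get n, fun n => (a.get n).pos, ?_⟩
  rintro _ ⟨K, hK, rfl⟩
  obtain ⟨m, hm, hsum⟩ := Hindman.FS_map_subset_image PNat.coeAddHom a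
    (Hindman.FS.finsetSum _ K hK)
  simp only [Stream'.get_map] at hsum
  exact hsum ▸ ha hm

section Blocks

variable {H : ℕ → Finset ℕ}

theorem lt_of_mem_blocks (hne : ∀ n, (H n).Nonempty)
    (hlt : ∀ n, ∀ a ∈ H n, ∀ b ∈ H (n + 1), a < b) {n m : ℕ} (hnm : n < m) :
    ∀ a ∈ H n, ∀ b ∈ H m, a < b := by
  induction m, hnm using Nat.le_induction with
  | base => exact hlt n
  | succ m _ ih =>
    intro a ha b hb
    obtain ⟨c, hc⟩ := hne m
    exact (ih a ha c hc).trans (hlt m c hc b hb)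

theorem FS_sum_blocks_subset (x : ℕ → ℕ) (hne : ∀ n, (H n).Nonempty)
    (hlt : ∀ n, ∀ a ∈ H n, ∀ b ∈ H (n + 1), a < b) :
    FS (fun n => ∑ t ∈ H n, x t) ⊆ FS x := by
  rintro _ ⟨K, hK, rfl⟩
  have hdisj : (K : Set ℕ).PairwiseDisjoint H := by
    intro n _ m _ hnm
    rcases hnm.lt_or_gt with h | h
    · exact Finset.disjoint_left.mpr fun a ha ha' => (lt_of_mem_blocks hne hlt h a ha a ha').false
    · exact Finset.disjoint_left.mpr fun a ha ha' => (lt_of_mem_blocks hne hlt h a ha' a ha).false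
  exact ⟨K.biUnion H, hK.biUnion fun n _ => hne n, (Finset.sum_biUnion hdisj).symm⟩

end Blocks

/-- Block `n + 1` is longer than the sum of `a` over all earlier blocks, so for positive `a` its
sum exceeds that of block `n`. -/
def blockStart (a : ℕ → ℕ) : ℕ → ℕ
  | 0 => 0
  | n + 1 => blockStart a n + 1 + ∑ t ∈ Finset.range (blockStart a n), a t

theorem blockStart_lt_succ (a : ℕ → ℕ) (n : ℕ) : blockStart a n < blockStart a (n + 1) := by
  rw [blockStart]
  omega

theorem strictMono_sum_Ico_blockStart {a : ℕ → ℕ} (ha : ∀ n, 0 < a n) :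
    StrictMono fun n => ∑ t ∈ Finset.Ico (blockStart a n) (blockStart a (n + 1)), a t := by
  refine strictMono_nat_of_lt_succ fun n => ?_
  set e := blockStart a
  calc ∑ t ∈ Finset.Ico (e n) (e (n + 1)), a t
      ≤ ∑ t ∈ Finset.range (e (n + 1)), a t :=
        Finset.sum_le_sum_of_subset fun t ht => Finset.mem_range.mpr (Finset.mem_Ico.mp ht).2
    _ < e (n + 2) - e (n + 1) := by simp only [e, blockStart]; omega
    _ = (Finset.Ico (e (n + 1)) (e (n + 2))).card • 1 := by
        rw [Nat.card_Ico, smul_eq_mul, mul_one]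
    _ ≤ ∑ t ∈ Finset.Ico (e (n + 1)) (e (n + 2)), a t :=
        Finset.card_nsmul_le_sum _ _ _ fun t _ => ha t

theorem hindman_with_sum_subsystems (r : ℕ) (C : ℕ → Fin r) :
    ∃ (i : Fin r) (x : ℕ → ℕ), Function.Injective x ∧ (∀ n, 0 < x n) ∧
      FS x ⊆ {n : ℕ | C n = i} ∧
      ∀ H : ℕ → Finset ℕ, (∀ n, (H n).Nonempty) →
        (∀ n, ∀ a ∈ H n, ∀ b ∈ H (n + 1), a < b) →
        FS (fun n => ∑ t ∈ H n, x t) ⊆ {n : ℕ | C n = i} := by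
  obtain ⟨i, a, ha, haC⟩ := exists_pos_FS_subset_fiber C
  set B := fun n => Finset.Ico (blockStart a n) (blockStart a (n + 1))
  have hBne : ∀ n, (B n).Nonempty := fun n => Finset.nonempty_Ico.mpr (blockStart_lt_succ a n)
  have hBlt : ∀ n, ∀ p ∈ B n, ∀ q ∈ B (n + 1), p < q := fun n p hp q hq =>
    (Finset.mem_Ico.mp hp).2.trans_le (Finset.mem_Ico.mp hq).1
  set x := fun n => ∑ t ∈ B n, a t
  have hxC : FS x ⊆ {n | C n = i} := (FS_sum_blocks_subset a hBne hBlt).trans haC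
  refine ⟨i, x, (strictMono_sum_Ico_blockStart ha).injective,
    fun n => Finset.sum_pos (fun t _ => ha t) (hBne n), hxC, fun H hne hlt => ?_⟩
  exact (FS_sum_blocks_subset x hne hlt).trans hxC
end
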